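/- arXiv:math/0402263 — 2 statements merged into one kernel-verified Lean document; each statement's English description precedes it below -/
import Mathlib

section
/- (ε-extension of isometries.) An infinite distance matrix r is universal if and only if for every ε > 0, all positive integers n < N, and every distance matrix q of order N whose corner of order n coincides with that of r (i.e. q k s = r k s for all k, s < n), there exist indices i₁,…,i_N ∈ ℕ with i_k = k for k = 1,…,n such that |r (i_k) (i_s) - q k s| < ε for all k, s ≤ N. -/
/-- An infinite distance matrix. -/
def IsInfDistMatrix (r : ℕ → ℕ → ℝ) : Prop :=
  (∀ i, r i i = 0) ∧ (∀ i j, 0 ≤ r i j) ∧ (∀ i j, r i j = r j i) ∧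
    ∀ i j k, r i k ≤ r i j + r j k

/-- A distance matrix of finite order `N`. -/
def IsDistMatrix {N : ℕ} (q : Fin N → Fin N → ℝ) : Prop :=
  (∀ i, q i i = 0) ∧ (∀ i j, 0 ≤ q i j) ∧ (∀ i j, q i j = q j i) ∧
    ∀ i j k, q i k ≤ q i j + q j k

/-- A universal infinite distance matrix. -/
def IsUniversal (r : ℕ → ℕ → ℝ) : Prop :=
  ∀ (n : ℕ) (a : Fin n → ℝ),
    (∀ i j : Fin n, |a i - a j| ≤ r i j ∧ r i j ≤ a i + a j) →
    ∀ ε > 0, ∃ m : ℕ, n ≤ m ∧ ∀ i : Fin n, |r i m - a i| < ε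

theorem universal_imp_eps_extension (r : ℕ → ℕ → ℝ) (hr : IsInfDistMatrix r) (hU : IsUniversal r) :
    ∀ ε > (0 : ℝ), ∀ n N : ℕ, 0 < n → n < N →
        ∀ q : Fin N → Fin N → ℝ, IsDistMatrix q →
          (∀ k s : Fin N, (k : ℕ) < n → (s : ℕ) < n → q k s = r k s) →
          ∃ i : Fin N → ℕ, (∀ k : Fin N, (k : ℕ) < n → i k = (k : ℕ)) ∧
            ∀ k s : Fin N, |r (i k) (i s) - q k s| < ε := by
  obtain ⟨hr0, hrpos, hrsymm, hrtri⟩ := hr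
  intro ε hε n N hn hnN q hq hcorner
  obtain ⟨hq0, hqpos, hqsymm, hqtri⟩ := hq
  suffices H : ∀ m : ℕ, n ≤ m → m ≤ N → ∀ δ > (0:ℝ), ∃ i : Fin N → ℕ,
      (∀ k : Fin N, (k : ℕ) < n → i k = (k : ℕ)) ∧
      ∀ k s : Fin N, (k : ℕ) < m → (s : ℕ) < m → |r (i k) (i s) - q k s| < δ by
    obtain ⟨i, h1, h2⟩ := H N (le_of_lt hnN) le_rfl ε hε
    exact ⟨i, h1, fun k s => h2 k s k.isLt s.isLt⟩
  intro m hnm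
  induction m, hnm using Nat.le_induction with
  | base =>
    intro _ δ hδ
    refine ⟨fun k => (k : ℕ), fun k _ => rfl, fun k s hk hs => ?_⟩
    rw [hcorner k s hk hs]
    simpa using hδ
  | succ m hm ih =>
    intro hmN δ hδ
    have hmN' : m < N := hmN
    obtain ⟨i, hifix, hie⟩ := ih (le_of_lt hmN') (δ/4) (by positivity)
    set n' : ℕ := (Finset.univ.sup fun k : Fin N => i k) + 1 with hn'
    have hik : ∀ k : Fin N, i k < n' := fun k =>
      Nat.lt_succ_of_le (Finset.le_sup (Finset.mem_univ k))
    set mF : Fin N := ⟨m, hmN'⟩ with hmF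
    set b : Fin N → ℝ := fun k => q k mF + δ/4 with hb
    set T : Finset (Fin N) := Finset.univ.filter (fun k => (k : ℕ) < m) with hT
    have hTne : T.Nonempty := ⟨⟨0, by omega⟩, by simp [hT]; omega⟩
    have hTmem : ∀ k : Fin N, k ∈ T ↔ (k : ℕ) < m := by
      intro k; simp [hT]
    set a : Fin n' → ℝ := fun j => T.inf' hTne (fun k => b k + r j (i k)) with ha
    -- admissibility
    have hadm : ∀ j j' : Fin n', |a j - a j'| ≤ r j j' ∧ r j j' ≤ a j + a j' := by
      intro j j'
      constructor
      · rw [abs_sub_le_iff]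
        constructor
        · have : a j - r j j' ≤ a j' := by
            apply Finset.le_inf'
            intro k hk
            have h1 : a j ≤ b k + r j (i k) := Finset.inf'_le _ hk
            have h2 : r j (i k) ≤ r j j' + r j' (i k) := hrtri _ _ _
            linarith
          linarith
        · have : a j' - r j j' ≤ a j := by
            apply Finset.le_inf'
            intro k hk
            have h1 : a j' ≤ b k + r j' (i k) := Finset.inf'_le _ hk
            have h2 : r j' (i k) ≤ r j' j + r j (i k) := hrtri _ _ _
            have h3 : r j' j = r j j' := hrsymm _ _
            linarith
          linarith
      · obtain ⟨k0, hk0T, hk0⟩ := Finset.exists_mem_eq_inf' hTne (fun k => b k + r j (i k))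
        obtain ⟨k1, hk1T, hk1⟩ := Finset.exists_mem_eq_inf' hTne (fun k => b k + r j' (i k))
        have e0 : a j = b k0 + r j (i k0) := hk0
        have e1 : a j' = b k1 + r j' (i k1) := hk1
        have htr : r j j' ≤ r j (i k0) + r (i k0) (i k1) + r (i k1) j' := by
          have := hrtri (j : ℕ) (i k0) (j' : ℕ)
          have := hrtri (i k0) (i k1) (j' : ℕ)
          linarith
        have hq01 : r (i k0) (i k1) < q k0 k1 + δ/4 := by
          have := hie k0 k1 ((hTmem k0).1 hk0T) ((hTmem k1).1 hk1T)
          rw [abs_sub_lt_iff] at this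
          linarith [this.1]
        have hqm : q k0 k1 ≤ q k0 mF + q k1 mF := by
          have := hqtri k0 mF k1
          have := hqsymm mF k1
          linarith
        have hsym : r (i k1) j' = r j' (i k1) := hrsymm _ _
        simp only [hb] at e0 e1
        linarith
    obtain ⟨m', hm'ge, hm'⟩ := hU n' a hadm (δ/4) (by positivity)
    refine ⟨fun k => if (k : ℕ) < m then i k else m', fun k hk => ?_, fun k s hk hs => ?_⟩
    · have hkm : (k : ℕ) < m := lt_of_lt_of_le hk hm
      simp only [hkm, if_pos]
      exact hifix k hk
    · -- key estimate for a "new" pair (k old, s new)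
      have key : ∀ k : Fin N, (k : ℕ) < m → |r (i k) m' - q k mF| < δ/2 := by
        intro k hk
        set jk : Fin n' := ⟨i k, hik k⟩ with hjk
        have h1 : |r (i k) m' - a jk| < δ/4 := hm' jk
        have h2 : a jk ≤ b k := by
          have h3 : a jk ≤ b k + r (i k) (i k) := Finset.inf'_le _ ((hTmem k).2 hk)
          rw [hr0] at h3
          linarith
        have h3 : b k - δ/4 ≤ a jk := by
          apply Finset.le_inf'
          intro k' hk'
          have h4 : q k k' - δ/4 < r (i k) (i k') := by
            have := hie k k' hk ((hTmem k').1 hk')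
            rw [abs_sub_lt_iff] at this
            linarith [this.2]
          have h5 : q k mF ≤ q k k' + q k' mF := hqtri _ _ _
          simp only [hb]
          linarith
        rw [abs_sub_lt_iff] at h1 ⊢
        simp only [hb] at h2 h3
        constructor <;> linarith [h1.1, h1.2]
      by_cases hk' : (k : ℕ) < m <;> by_cases hs' : (s : ℕ) < m
      · simp only [hk', hs', if_pos]
        exact lt_trans (hie k s hk' hs') (by linarith)
      · have hsm : s = mF := Fin.ext (by simp [hmF]; omega)
        simp only [hk', hs', if_pos, if_neg, ite_true, ite_false]
        subst hsm
        exact lt_of_lt_of_le (key k hk') (by linarith)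
      · have hkm : k = mF := Fin.ext (by simp [hmF]; omega)
        simp only [hk', hs', ite_true, ite_false]
        subst hkm
        have h1 := key s hs'
        rw [hrsymm m' (i s), hqsymm mF s]
        exact lt_of_lt_of_le h1 (by linarith)
      · have hkm : k = mF := Fin.ext (by simp [hmF]; omega)
        have hsm : s = mF := Fin.ext (by simp [hmF]; omega)
        subst hkm; subst hsm
        simp only [hk', ite_false, hr0, hq0]
        simpa using hδ

/-- Bordering a corner of `r` by one extra column `c`. -/
def borderMatrix (r : ℕ → ℕ → ℝ) (n : ℕ) (c : ℕ → ℝ) :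
    Fin (n+1) → Fin (n+1) → ℝ := fun k s =>
  if (k : ℕ) < n then (if (s : ℕ) < n then r k s else c k)
  else (if (s : ℕ) < n then c s else 0)

theorem borderMatrix_isDist (r : ℕ → ℕ → ℝ) (hr : IsInfDistMatrix r) (n : ℕ)
    (c : ℕ → ℝ) (hc0 : ∀ k, k < n → 0 ≤ c k)
    (hc1 : ∀ k s, k < n → s < n → |c k - c s| ≤ r k s)
    (hc2 : ∀ k s, k < n → s < n → r k s ≤ c k + c s) :
    IsDistMatrix (borderMatrix r n c) := by
  obtain ⟨hr0, hrpos, hrsymm, hrtri⟩ := hr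
  refine ⟨?_, ?_, ?_, ?_⟩
  · intro i
    by_cases hi : (i : ℕ) < n <;> simp [borderMatrix, hi, hr0]
  · intro i j
    by_cases hi : (i : ℕ) < n <;> by_cases hj : (j : ℕ) < n <;>
      simp only [borderMatrix, hi, hj, ite_true, ite_false]
    · exact hrpos _ _
    · exact hc0 _ hi
    · exact hc0 _ hj
    · exact le_rfl
  · intro i j
    by_cases hi : (i : ℕ) < n <;> by_cases hj : (j : ℕ) < n <;>
      simp [borderMatrix, hi, hj, hrsymm]
  · intro i j k
    by_cases hi : (i : ℕ) < n <;> by_cases hj : (j : ℕ) < n <;>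
        by_cases hk : (k : ℕ) < n <;>
      simp only [borderMatrix, hi, hj, hk, ite_true, ite_false]
    · exact hrtri _ _ _
    · have h1 := hc1 (i : ℕ) (j : ℕ) hi hj
      rw [abs_sub_le_iff] at h1
      have h2 := h1.1
      have h3 := hrsymm (i : ℕ) (j : ℕ)
      linarith
    · exact hc2 _ _ hi hk
    · linarith [hc0 _ hi]
    · have h1 := hc1 (k : ℕ) (j : ℕ) hk hj
      rw [abs_sub_le_iff] at h1
      have h2 := h1.1
      have h3 := hrsymm (j : ℕ) (k : ℕ)
      linarith
    · linarith [hc0 _ hj]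
    · linarith [hc0 _ hk]
    · linarith

theorem eps_extension_imp_universal (r : ℕ → ℕ → ℝ) (hr : IsInfDistMatrix r)
    (hE : ∀ ε > (0 : ℝ), ∀ n N : ℕ, 0 < n → n < N →
        ∀ q : Fin N → Fin N → ℝ, IsDistMatrix q →
          (∀ k s : Fin N, (k : ℕ) < n → (s : ℕ) < n → q k s = r k s) →
          ∃ i : Fin N → ℕ, (∀ k : Fin N, (k : ℕ) < n → i k = (k : ℕ)) ∧
            ∀ k s : Fin N, |r (i k) (i s) - q k s| < ε) :
    IsUniversal r := by
  obtain ⟨hr0, hrpos, hrsymm, hrtri⟩ := hr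
  intro n a hadm ε hε
  rcases Nat.eq_zero_or_pos n with hn0 | hn
  · subst hn0
    exact ⟨0, le_rfl, fun i => i.elim0⟩
  have hane : (Finset.univ : Finset (Fin n)).Nonempty := ⟨⟨0, hn⟩, Finset.mem_univ _⟩
  have hapos : ∀ k : Fin n, 0 ≤ a k := by
    intro k
    have := (hadm k k).2
    rw [hr0] at this
    linarith
  by_cases hA : ∃ j : Fin n, ∀ k : Fin n, a k = r k j
  · -- `a` is exactly a column of `r`; perturb by `δ`
    obtain ⟨j₀, hj₀⟩ := hA
    have hS : Set.Finite (Set.range (fun j' : Fin n => r j₀ j')) := Set.finite_range _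
    have hIoo : (Set.Ioo (0:ℝ) (ε/2)).Infinite := Set.Ioo_infinite (by linarith)
    obtain ⟨δ, hδmem⟩ := (hIoo.diff hS).nonempty
    obtain ⟨⟨hδ0, hδε⟩, hδS⟩ := hδmem
    have hδne : ∀ j' : Fin n, r j₀ j' ≠ δ := by
      intro j' h
      exact hδS ⟨j', h⟩
    set ε' : ℝ := min (ε/2) (Finset.univ.inf' hane (fun j' : Fin n => |r j₀ j' - δ|)) with hε'
    have hε'pos : 0 < ε' := by
      refine lt_min (by linarith) ((Finset.lt_inf'_iff _).2 fun j' _ => ?_)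
      rw [abs_pos]
      intro h
      exact hδne j' (by linarith)
    set c : ℕ → ℝ := fun k => if k < n then r k j₀ + δ else 0 with hc
    have hq := borderMatrix_isDist r ⟨hr0, hrpos, hrsymm, hrtri⟩ n c
      (by intro k hk; simp only [hc, hk, if_pos]; linarith [hrpos k j₀])
      (by
        intro k s hk hs
        simp only [hc, hk, hs, if_pos]
        have h1 := hrtri k s (j₀ : ℕ)
        have h2 := hrtri s k (j₀ : ℕ)
        have h3 := hrsymm k s
        rw [abs_sub_le_iff]
        constructor <;> linarith)
      (by
        intro k s hk hs
        simp only [hc, hk, hs, if_pos]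
        have h1 := hrtri k (j₀ : ℕ) s
        have h2 := hrsymm (j₀ : ℕ) s
        linarith)
    obtain ⟨i, hifix, hie⟩ := hE ε' hε'pos n (n+1) hn (Nat.lt_succ_self n)
      (borderMatrix r n c) hq
      (by intro k s hk hs; simp [borderMatrix, hk, hs])
    set m : ℕ := i (Fin.last n) with hm
    have hlast : ¬ ((Fin.last n : Fin (n+1)) : ℕ) < n := by simp
    have hcol : ∀ k : Fin n, |r k m - (r k j₀ + δ)| < ε' := by
      intro k
      have hkc : ((⟨(k : ℕ), by omega⟩ : Fin (n+1)) : ℕ) < n := k.isLt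
      have h := hie ⟨(k : ℕ), by omega⟩ (Fin.last n)
      rw [hifix _ hkc] at h
      simpa [borderMatrix, hkc, hlast, hc, k.isLt] using h
    have hmn : n ≤ m := by
      by_contra hmn
      push_neg at hmn
      have h1 := hcol j₀
      rw [hr0] at h1
      rw [zero_add] at h1
      have h2 : ε' ≤ |r (j₀ : ℕ) m - δ| := by
        have h3 := Finset.inf'_le (fun j' : Fin n => |r (j₀ : ℕ) (j' : ℕ) - δ|)
          (Finset.mem_univ (⟨m, hmn⟩ : Fin n))
        exact le_trans (min_le_right _ _) h3
      linarith
    refine ⟨m, hmn, fun k => ?_⟩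
    have h1 := hcol k
    rw [abs_sub_lt_iff] at h1 ⊢
    rw [hj₀ k]
    have h2 : ε' ≤ ε/2 := min_le_left _ _
    constructor <;> linarith [h1.1, h1.2]
  · -- `a` differs from every column
    push_neg at hA
    have hηpos : 0 < Finset.univ.inf' hane
        (fun j : Fin n => Finset.univ.sup' hane (fun k : Fin n => |a k - r k j|)) := by
      refine (Finset.lt_inf'_iff _).2 fun j _ => ?_
      obtain ⟨k, hk⟩ := hA j
      calc (0:ℝ) < |a k - r k j| := abs_pos.2 (sub_ne_zero.2 hk)
        _ ≤ _ := Finset.le_sup' (fun k : Fin n => |a k - r (k : ℕ) (j : ℕ)|) (Finset.mem_univ k)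
    set η : ℝ := Finset.univ.inf' hane
      (fun j : Fin n => Finset.univ.sup' hane (fun k : Fin n => |a k - r k j|)) with hη
    set ε' : ℝ := min ε η with hε'
    have hε'pos : 0 < ε' := lt_min hε hηpos
    set c : ℕ → ℝ := fun k => if h : k < n then a ⟨k, h⟩ else 0 with hc
    have hq := borderMatrix_isDist r ⟨hr0, hrpos, hrsymm, hrtri⟩ n c
      (by intro k hk; simp only [hc, hk, dif_pos]; exact hapos _)
      (by
        intro k s hk hs
        simp only [hc, hk, hs, dif_pos]
        exact (hadm ⟨k, hk⟩ ⟨s, hs⟩).1)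
      (by
        intro k s hk hs
        simp only [hc, hk, hs, dif_pos]
        exact (hadm ⟨k, hk⟩ ⟨s, hs⟩).2)
    obtain ⟨i, hifix, hie⟩ := hE ε' hε'pos n (n+1) hn (Nat.lt_succ_self n)
      (borderMatrix r n c) hq
      (by intro k s hk hs; simp [borderMatrix, hk, hs])
    set m : ℕ := i (Fin.last n) with hm
    have hlast : ¬ ((Fin.last n : Fin (n+1)) : ℕ) < n := by simp
    have hcol : ∀ k : Fin n, |r k m - a k| < ε' := by
      intro k
      have hkc : ((⟨(k : ℕ), by omega⟩ : Fin (n+1)) : ℕ) < n := k.isLt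
      have h := hie ⟨(k : ℕ), by omega⟩ (Fin.last n)
      rw [hifix _ hkc] at h
      simpa [borderMatrix, hkc, hlast, hc, k.isLt] using h
    have hmn : n ≤ m := by
      by_contra hmn
      push_neg at hmn
      set j : Fin n := ⟨m, hmn⟩ with hj
      obtain ⟨k, hkmem, hk⟩ := Finset.exists_mem_eq_sup' hane
        (fun k : Fin n => |a k - r (k : ℕ) (j : ℕ)|)
      have h1 : ε' ≤ Finset.univ.sup' hane (fun k : Fin n => |a k - r (k : ℕ) (j : ℕ)|) :=
        le_trans (min_le_right ε η) (Finset.inf'_le _ (Finset.mem_univ j))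
      have h2 := hcol k
      rw [abs_sub_comm] at h2
      have h3 : (j : ℕ) = m := rfl
      rw [hk, h3] at h1
      linarith
    exact ⟨m, hmn, fun k => lt_of_lt_of_le (hcol k) (min_le_left _ _)⟩

/-- (`ε`-extension of isometries.) An infinite distance matrix `r` is universal iff for
every `ε > 0`, all `0 < n < N`, and every finite distance matrix `q` of order `N` whose
order-`n` corner coincides with that of `r`, there are indices `i : Fin N → ℕ` fixing the
first `n` coordinates such that `|r (i k) (i s) - q k s| < ε` for all `k, s`. -/
theorem universal_iff_eps_extension (r : ℕ → ℕ → ℝ) (hr : IsInfDistMatrix r) :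
    IsUniversal r ↔
      ∀ ε > (0 : ℝ), ∀ n N : ℕ, 0 < n → n < N →
        ∀ q : Fin N → Fin N → ℝ, IsDistMatrix q →
          (∀ k s : Fin N, (k : ℕ) < n → (s : ℕ) < n → q k s = r k s) →
          ∃ i : Fin N → ℕ, (∀ k : Fin N, (k : ℕ) < n → i k = (k : ℕ)) ∧
            ∀ k s : Fin N, |r (i k) (i s) - q k s| < ε :=
  ⟨fun hU => universal_imp_eps_extension r hr hU,
   fun hE => eps_extension_imp_universal r hr hE⟩
end

section
/- (Extension of isometries.) Let r be a universal proper infinite distance matrix and U_r the metric completion of (ℕ, r). For every n < N, all points a₁,…,aₙ ∈ U_r, and every distance matrix q of order N with q i j = dist (a_i) (a_j) for all i, j ≤ n, there exist points a_{n+1},…,a_N ∈ U_r such that dist (a_i) (a_j) = q i j for all i, j ≤ N. -/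
/-- A proper infinite distance matrix: no zeros off the diagonal. -/
def IsProper (r : ℕ → ℕ → ℝ) : Prop := ∀ i j, i ≠ j → 0 < r i j

/-- A copy of `ℕ`, to be endowed with the metric given by a proper distance matrix `r`. -/
def Carrier (r : ℕ → ℕ → ℝ) (_ : IsInfDistMatrix r) (_ : IsProper r) : Type := ℕ

/-- The metric on `ℕ` (i.e. on `Carrier r hr hp`) given by `d i j = r i j`. -/
noncomputable instance instCarrierMetric (r : ℕ → ℕ → ℝ) (hr : IsInfDistMatrix r)
    (hp : IsProper r) : MetricSpace (Carrier r hr hp) where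
  dist i j := r i j
  dist_self i := hr.1 i
  dist_comm i j := hr.2.2.1 i j
  dist_triangle i j k := hr.2.2.2 i j k
  eq_of_dist_eq_zero := by
    intro i j h
    by_contra hne
    exact absurd h (ne_of_gt (hp i j hne))

/-- The metric completion `U_r` of `(ℕ, r)`. -/
abbrev CompletionOf (r : ℕ → ℕ → ℝ) (hr : IsInfDistMatrix r) (hp : IsProper r) : Type :=
  UniformSpace.Completion (Carrier r hr hp)

section Aux

variable (r : ℕ → ℕ → ℝ) (hr : IsInfDistMatrix r) (hp : IsProper r)

/-- Natural numbers as elements of the carrier. -/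
def toC (m : ℕ) : Carrier r hr hp := m

/-- Carrier elements as natural numbers. -/
def ofC (m : Carrier r hr hp) : ℕ := m

/-- Natural numbers as elements of the completion. -/
noncomputable def toU (m : ℕ) : CompletionOf r hr hp := (toC r hr hp m : Carrier r hr hp)

lemma dist_toU (i j : ℕ) : dist (toU r hr hp i) (toU r hr hp j) = r i j := by
  rw [toU, toU, UniformSpace.Completion.dist_eq]; rfl

lemma dist_coeC (i j : Carrier r hr hp) :
    dist ((i : CompletionOf r hr hp)) ((j : CompletionOf r hr hp)) = r (ofC r hr hp i) (ofC r hr hp j) := by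
  rw [UniformSpace.Completion.dist_eq]; rfl

lemma approx (hu : IsUniversal r) {k : ℕ} (x : Fin k → CompletionOf r hr hp)
    (c : Fin k → ℝ)
    (hc : ∀ i j, |c i - c j| ≤ dist (x i) (x j) ∧ dist (x i) (x j) ≤ c i + c j)
    {δ : ℝ} (hδ : 0 < δ) :
    ∃ y : CompletionOf r hr hp, ∀ i, |dist (x i) y - c i| < δ := by
  rcases Nat.eq_zero_or_pos k with hk | hk
  · subst hk; exact ⟨toU r hr hp 0, fun i => i.elim0⟩
  have hc0 : ∀ i, 0 ≤ c i := by
    intro i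
    have := (hc i i).2
    simp at this; linarith
  set ε := δ / 4 with hεdef
  have hε : 0 < ε := by positivity
  -- choose approximating naturals
  have hd := fun i => (UniformSpace.Completion.denseRange_coe (α := Carrier r hr hp)).exists_dist_lt (x i) hε
  choose p hpd using hd
  set pn : Fin k → ℕ := fun i => ofC r hr hp (p i) with hpn
  have hdistp : ∀ i j, dist ((p i : CompletionOf r hr hp)) ((p j : CompletionOf r hr hp)) = r (pn i) (pn j) :=
    fun i j => dist_coeC r hr hp (p i) (p j)
  -- error estimate between dist (x i) (x j) and r (pn i) (pn j)
  have hrd : ∀ i j, |dist (x i) (x j) - r (pn i) (pn j)| ≤ 2 * ε := by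
    intro i j
    have h1 : dist (x i) (x j) ≤ dist (x i) ((p i : CompletionOf r hr hp)) +
        dist ((p i : CompletionOf r hr hp)) ((p j : CompletionOf r hr hp)) +
        dist ((p j : CompletionOf r hr hp)) (x j) := dist_triangle4 _ _ _ _
    have h2 : dist ((p i : CompletionOf r hr hp)) ((p j : CompletionOf r hr hp)) ≤
        dist ((p i : CompletionOf r hr hp)) (x i) + dist (x i) (x j) +
        dist (x j) ((p j : CompletionOf r hr hp)) := dist_triangle4 _ _ _ _
    rw [hdistp] at h1 h2
    have e1 := hpd i
    have e2 := hpd j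
    rw [dist_comm] at e1 e2
    have e3 : dist (x i) ((p i : CompletionOf r hr hp)) < ε := by rw [dist_comm]; exact e1
    have e4 : dist (x j) ((p j : CompletionOf r hr hp)) < ε := by rw [dist_comm]; exact e2
    rw [abs_le]
    exact ⟨by linarith, by linarith⟩
  -- an upper bound for the chosen naturals
  set k' : ℕ := (Finset.univ.sup pn) + 1 with hk'def
  have hk' : ∀ i, pn i < k' := fun i => Nat.lt_succ_of_le (Finset.le_sup (Finset.mem_univ i))
  have hne : (Finset.univ : Finset (Fin k)).Nonempty := ⟨⟨0, hk⟩, Finset.mem_univ _⟩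
  set F : Fin k' → ℝ := fun m => Finset.univ.inf' hne (fun i => c i + 2 * ε + r (pn i) (m : ℕ)) with hF
  have hFle : ∀ (m : Fin k') (i : Fin k), F m ≤ c i + 2 * ε + r (pn i) (m : ℕ) :=
    fun m i => Finset.inf'_le _ (Finset.mem_univ i)
  have hFwit : ∀ m : Fin k', ∃ i : Fin k, F m = c i + 2 * ε + r (pn i) (m : ℕ) := by
    intro m
    obtain ⟨i, -, hi⟩ := Finset.exists_mem_eq_inf' hne (fun i => c i + 2 * ε + r (pn i) (m : ℕ))
    exact ⟨i, hi⟩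
  have hadm : ∀ m₁ m₂ : Fin k', |F m₁ - F m₂| ≤ r ↑m₁ ↑m₂ ∧ r ↑m₁ ↑m₂ ≤ F m₁ + F m₂ := by
    intro m₁ m₂
    obtain ⟨i1, hi1⟩ := hFwit m₁
    obtain ⟨i2, hi2⟩ := hFwit m₂
    constructor
    · rw [abs_sub_le_iff]
      constructor
      · have h1 := hFle m₁ i2
        have h2 : r (pn i2) (m₁ : ℕ) ≤ r (pn i2) (m₂ : ℕ) + r (m₂ : ℕ) (m₁ : ℕ) := hr.2.2.2 _ _ _
        have h3 : r (m₂ : ℕ) (m₁ : ℕ) = r (m₁ : ℕ) (m₂ : ℕ) := hr.2.2.1 _ _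
        linarith
      · have h1 := hFle m₂ i1
        have h2 : r (pn i1) (m₂ : ℕ) ≤ r (pn i1) (m₁ : ℕ) + r (m₁ : ℕ) (m₂ : ℕ) := hr.2.2.2 _ _ _
        linarith
    · have h2 : r (m₁ : ℕ) (m₂ : ℕ) ≤ r (m₁ : ℕ) (pn i1) + r (pn i1) (pn i2) + r (pn i2) (m₂ : ℕ) := by
        have a1 := hr.2.2.2 (m₁ : ℕ) (pn i1) (m₂ : ℕ)
        have a2 := hr.2.2.2 (pn i1) (pn i2) (m₂ : ℕ)
        linarith
      have h3 : r (pn i1) (pn i2) ≤ c i1 + c i2 + 2 * ε := by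
        have a1 := (abs_le.mp (hrd i1 i2)).1
        have a2 := (hc i1 i2).2
        linarith
      have h4 : r (m₁ : ℕ) (pn i1) = r (pn i1) (m₁ : ℕ) := hr.2.2.1 _ _
      linarith
  obtain ⟨m, hmk, hFm⟩ := hu k' F hadm ε hε
  refine ⟨toU r hr hp m, fun i => ?_⟩
  set j : Fin k' := ⟨pn i, hk' i⟩ with hj
  have h1 : |dist (x i) (toU r hr hp m) - r (pn i) m| < ε := by
    have hre : r (pn i) m = dist ((p i : CompletionOf r hr hp)) (toU r hr hp m) :=
      (dist_coeC r hr hp (p i) (toC r hr hp m)).symm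
    rw [hre]
    have habs := abs_dist_sub_le (x i) ((p i : CompletionOf r hr hp)) (toU r hr hp m)
    have := hpd i
    calc |dist (x i) (toU r hr hp m) - dist ((p i : CompletionOf r hr hp)) (toU r hr hp m)|
        ≤ dist (x i) ((p i : CompletionOf r hr hp)) := habs
      _ < ε := hpd i
  have h2 : |r (pn i) m - F j| < ε := hFm j
  have h3 : |F j - c i| ≤ 2 * ε := by
    rw [abs_le]
    constructor
    · have : c i ≤ F j := by
        apply Finset.le_inf'
        intro l _
        show c i ≤ c l + 2 * ε + r (pn l) (pn i)
        have a1 := (abs_le.mp (hc i l).1).2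
        have a2 := (abs_le.mp (hrd l i)).2
        have a3 : dist (x i) (x l) = dist (x l) (x i) := dist_comm _ _
        linarith
      linarith
    · have := hFle j i
      have hz : r (pn i) (pn i) = 0 := hr.1 _
      have : (j : ℕ) = pn i := rfl
      simp only [this] at *
      linarith
  have t1 := abs_sub_le (dist (x i) (toU r hr hp m)) (r (pn i) m) (c i)
  have t2 := abs_sub_le (r (pn i) m) (F j) (c i)
  have habs2 : |dist (x i) (toU r hr hp m) - c i| < 4 * ε := by linarith
  rw [hεdef] at habs2
  linarith
lemma exact_point (hu : IsUniversal r) {k : ℕ} (x : Fin k → CompletionOf r hr hp)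
    (c : Fin k → ℝ)
    (hc : ∀ i j, |c i - c j| ≤ dist (x i) (x j) ∧ dist (x i) (x j) ≤ c i + c j) :
    ∃ y : CompletionOf r hr hp, ∀ i, dist (x i) y = c i := by
  rcases Nat.eq_zero_or_pos k with hk | hk
  · subst hk; exact ⟨toU r hr hp 0, fun i => i.elim0⟩
  have hne : (Finset.univ : Finset (Fin k)).Nonempty := ⟨⟨0, hk⟩, Finset.mem_univ _⟩
  have key : ∀ (t : ℕ) (y : CompletionOf r hr hp),
      (∀ i, |dist (x i) y - c i| < (1/2 : ℝ)^t) →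
      ∃ y', (∀ i, |dist (x i) y' - c i| < (1/2 : ℝ)^(t+1)) ∧
        dist y y' < (1/2 : ℝ)^t + (1/2 : ℝ)^(t+1) := by
    intro t y hy
    set L : ℝ := Finset.univ.sup' hne (fun i => |c i - dist (x i) y|) with hLdef
    have hL1 : ∀ i, |c i - dist (x i) y| ≤ L := fun i => Finset.le_sup' (fun i => |c i - dist (x i) y|) (Finset.mem_univ i)
    have hLlt : L < (1/2 : ℝ)^t := by
      rw [hLdef, Finset.sup'_lt_iff]
      intro i _
      rw [abs_sub_comm]
      exact hy i
    have hL0 : 0 ≤ L := le_trans (abs_nonneg _) (hL1 ⟨0, hk⟩)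
    set x' : Fin (k+1) → CompletionOf r hr hp := Fin.snoc x y with hx'
    set c' : Fin (k+1) → ℝ := Fin.snoc c L with hc'
    have hc'adm : ∀ i j : Fin (k+1),
        |c' i - c' j| ≤ dist (x' i) (x' j) ∧ dist (x' i) (x' j) ≤ c' i + c' j := by
      have pair : ∀ i : Fin k, |c i - L| ≤ dist (x i) y ∧ dist (x i) y ≤ c i + L := by
        intro i
        have h1 : c i - L ≤ dist (x i) y := by
          have := (abs_le.mp (hL1 i)).2
          linarith [abs_nonneg (c i - dist (x i) y), le_abs_self (c i - dist (x i) y)]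
        have h2 : L - c i ≤ dist (x i) y := by
          apply sub_le_iff_le_add.mpr
          rw [hLdef]
          apply Finset.sup'_le
          intro l _
          rw [abs_le]
          constructor
          · have a1 := (abs_le.mp (hc l i).1).1
            have a2 : dist (x l) y ≤ dist (x l) (x i) + dist (x i) y := dist_triangle _ _ _
            have : (0:ℝ) ≤ dist (x l) y := dist_nonneg
            have : (0:ℝ) ≤ dist (x i) y := dist_nonneg
            linarith [(hc l i).2]
          · have a1 := (abs_le.mp (hc l i).1).2
            have a4 : dist (x l) (x i) ≤ dist (x l) y + dist y (x i) := dist_triangle _ _ _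
            have a5 : dist y (x i) = dist (x i) y := dist_comm _ _
            linarith
        have h3 : dist (x i) y ≤ c i + L := by
          have := (abs_le.mp (hL1 i)).1
          linarith
        exact ⟨abs_le.mpr ⟨by linarith, by linarith⟩, h3⟩
      intro i j
      refine Fin.lastCases ?_ ?_ i <;> [skip; intro i0] <;>
        (refine Fin.lastCases ?_ ?_ j <;> [skip; intro j0]) <;>
          simp only [hx', hc', Fin.snoc_last, Fin.snoc_castSucc]
      · simp [abs_le, hL0]
      · have := pair j0
        rw [dist_comm, abs_sub_comm]
        exact ⟨this.1, by linarith [this.2]⟩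
      · exact pair i0
      · exact hc i0 j0
    obtain ⟨y', hy'⟩ := approx r hr hp hu x' c' hc'adm (δ := (1/2 : ℝ)^(t+1)) (by positivity)
    refine ⟨y', fun i => ?_, ?_⟩
    · have := hy' (Fin.castSucc i)
      simpa only [hx', hc', Fin.snoc_castSucc] using this
    · have := hy' (Fin.last k)
      simp only [hx', hc', Fin.snoc_last] at this
      have := (abs_lt.mp this).2
      linarith
  have key' : ∀ (t : ℕ) (y : CompletionOf r hr hp), ∃ y',
      (∀ i, |dist (x i) y - c i| < (1/2 : ℝ)^t) →
      ((∀ i, |dist (x i) y' - c i| < (1/2 : ℝ)^(t+1)) ∧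
        dist y y' < (1/2 : ℝ)^t + (1/2 : ℝ)^(t+1)) := by
    intro t y
    by_cases h : ∀ i, |dist (x i) y - c i| < (1/2 : ℝ)^t
    · obtain ⟨y', h1, h2⟩ := key t y h
      exact ⟨y', fun _ => ⟨h1, h2⟩⟩
    · exact ⟨y, fun h' => absurd h' h⟩
  obtain ⟨y0, hy0⟩ := approx r hr hp hu x c hc (δ := (1/2 : ℝ)^0) (by norm_num)
  choose f hf using key'
  set g : ℕ → CompletionOf r hr hp := fun t => Nat.rec y0 (fun t y => f t y) t with hg
  have hgs : ∀ t, g (t+1) = f t (g t) := fun t => rfl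
  have hP : ∀ t, ∀ i, |dist (x i) (g t) - c i| < (1/2 : ℝ)^t := by
    intro t
    induction t with
    | zero => exact hy0
    | succ t ih => exact (hf t (g t) ih).1
  have hd : ∀ t, dist (g t) (g (t+1)) ≤ 2 * (1/2 : ℝ)^t := by
    intro t
    have h1 := (hf t (g t) (hP t)).2
    have h2 : (1/2 : ℝ)^(t+1) ≤ (1/2 : ℝ)^t := by
      have : (0:ℝ) ≤ (1/2 : ℝ)^t := by positivity
      rw [pow_succ]; linarith
    rw [hgs t]
    linarith
  have hcauchy : CauchySeq g := cauchySeq_of_le_geometric (1/2) 2 (by norm_num) (fun t => by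
    have := hd t; linarith)
  obtain ⟨y, hy⟩ := cauchySeq_tendsto_of_complete hcauchy
  refine ⟨y, fun i => ?_⟩
  have h1 : Filter.Tendsto (fun t => dist (x i) (g t)) Filter.atTop (nhds (dist (x i) y)) :=
    Filter.Tendsto.dist tendsto_const_nhds hy
  have h2 : Filter.Tendsto (fun t => dist (x i) (g t)) Filter.atTop (nhds (c i)) := by
    rw [← tendsto_sub_nhds_zero_iff]
    have h0 : Filter.Tendsto (fun t : ℕ => (1/2 : ℝ)^t) Filter.atTop (nhds 0) :=
      tendsto_pow_atTop_nhds_zero_of_lt_one (by norm_num) (by norm_num)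
    refine squeeze_zero_norm (fun t => ?_) h0
    rw [Real.norm_eq_abs]
    exact (hP t i).le
  exact tendsto_nhds_unique h1 h2

end Aux

/-- (Extension of isometries.) Let `r` be a universal proper infinite distance matrix and
`U_r` the completion of `(ℕ, r)`. For every `n < N`, points `a₁, …, aₙ ∈ U_r`, and every
distance matrix `q` of order `N` whose order-`n` corner is the distance matrix of the
`aᵢ`, there exist points `a_{n+1}, …, a_N` extending them with distance matrix `q`. -/
theorem extension_of_isometries (r : ℕ → ℕ → ℝ) (hr : IsInfDistMatrix r)
    (hp : IsProper r) (hu : IsUniversal r) {n N : ℕ} (hnN : n < N)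
    (a : Fin n → CompletionOf r hr hp) (q : Fin N → Fin N → ℝ) (hq : IsDistMatrix q)
    (hcorner : ∀ i j : Fin n,
      q (Fin.castLE hnN.le i) (Fin.castLE hnN.le j) = dist (a i) (a j)) :
    ∃ b : Fin N → CompletionOf r hr hp,
      (∀ i : Fin n, b (Fin.castLE hnN.le i) = a i) ∧
      ∀ i j : Fin N, dist (b i) (b j) = q i j := by
  have claim : ∀ (m : ℕ) (hnm : n ≤ m), ∀ hmN : m ≤ N,
      ∃ b : Fin m → CompletionOf r hr hp,
        (∀ i : Fin n, b (Fin.castLE hnm i) = a i) ∧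
        ∀ i j : Fin m, dist (b i) (b j) = q (Fin.castLE hmN i) (Fin.castLE hmN j) := by
    intro m hnm
    induction m, hnm using Nat.le_induction with
    | base =>
      intro hmN
      exact ⟨a, fun i => rfl, fun i j => (hcorner i j).symm⟩
    | succ m hnm ih =>
      intro hmN
      have hmN' : m ≤ N := le_trans (Nat.le_succ m) hmN
      obtain ⟨b, hb1, hb2⟩ := ih hmN'
      set M : Fin N := ⟨m, Nat.lt_of_succ_le hmN⟩ with hM
      set cvec : Fin m → ℝ := fun i => q (Fin.castLE hmN' i) M with hcvec
      have hcadm : ∀ i j : Fin m, |cvec i - cvec j| ≤ dist (b i) (b j) ∧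
          dist (b i) (b j) ≤ cvec i + cvec j := by
        intro i j
        rw [hb2 i j]
        refine ⟨abs_le.mpr ⟨?_, ?_⟩, ?_⟩
        · have h1 := hq.2.2.2 (Fin.castLE hmN' j) (Fin.castLE hmN' i) M
          have h2 := hq.2.2.1 (Fin.castLE hmN' j) (Fin.castLE hmN' i)
          simp only [hcvec]
          linarith
        · have h1 := hq.2.2.2 (Fin.castLE hmN' i) (Fin.castLE hmN' j) M
          simp only [hcvec]
          linarith
        · have h1 := hq.2.2.2 (Fin.castLE hmN' i) M (Fin.castLE hmN' j)
          have h2 := hq.2.2.1 M (Fin.castLE hmN' j)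
          simp only [hcvec]
          linarith
      obtain ⟨y, hy⟩ := exact_point r hr hp hu b cvec hcadm
      refine ⟨Fin.snoc b y, ?_, ?_⟩
      · intro i
        rw [show Fin.castLE (by omega : n ≤ m + 1) i =
          Fin.castSucc (Fin.castLE hnm i) from rfl, Fin.snoc_castSucc]
        exact hb1 i
      · intro i j
        refine Fin.lastCases ?_ ?_ i <;> [skip; intro i0] <;>
          (refine Fin.lastCases ?_ ?_ j <;> [skip; intro j0])
        · rw [Fin.snoc_last, dist_self]
          exact (hq.1 _).symm
        · rw [show Fin.castSucc j0 = Fin.castSucc j0 from rfl, Fin.snoc_last,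
            Fin.snoc_castSucc, dist_comm, hy j0]
          exact hq.2.2.1 _ _
        · rw [Fin.snoc_last, Fin.snoc_castSucc, hy i0]
          rfl
        · rw [Fin.snoc_castSucc, Fin.snoc_castSucc]
          exact hb2 i0 j0
  obtain ⟨b, hb1, hb2⟩ := claim N hnN.le le_rfl
  exact ⟨b, hb1, fun i j => hb2 i j⟩
end
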